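/- Fix 2 ≤ i ≤ k, an index b with i − 1 ≤ b ≤ n serving as the fixed right end of the i-th block, and a constant C ∈ ℝ representing the fixed contribution max over p > i of R_{l_p r_p} of the fixed later blocks. For i − 1 ≤ l ≤ b define g(l) = max( M(i−1, l−1), R_{l b}, C ), where M(i−1, l−1) is defined for every such l (in particular for l = i − 1 the set {0,...,i−2} has exactly i − 1 elements). Then g is unimodal with a unique minimum value as a function of l on {i−1,...,b}. -/

import Mathlib

/-- Maximum of `f` over a finite set of indices, with the empty maximum being `0`. -/
noncomputable def maxOver (S : Finset ℕ) (f : ℕ → ℝ) : ℝ := S.fold max 0 f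

/-- Left evacuation time to sink `x t` of the subpath starting at `x l`, under weights `w`. -/
noncomputable def thetaL (x : ℕ → ℝ) (τ : ℝ) (w : ℕ → ℝ) (l t : ℕ) : ℝ :=
  maxOver (Finset.Ico l t) (fun i => (x t - x i) * τ + ∑ j ∈ Finset.Icc l i, w j)

/-- Right evacuation time to sink `x t` of the subpath ending at `x r`, under weights `w`. -/
noncomputable def thetaR (x : ℕ → ℝ) (τ : ℝ) (w : ℕ → ℝ) (t r : ℕ) : ℝ :=
  maxOver (Finset.Ioc t r) (fun i => (x i - x t) * τ + ∑ j ∈ Finset.Icc i r, w j)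

/-- 1-sink evacuation time `Θ¹([x_l,x_r], x_t, w)`. -/
noncomputable def theta1 (x : ℕ → ℝ) (τ : ℝ) (w : ℕ → ℝ) (l t r : ℕ) : ℝ :=
  max (thetaL x τ w l t) (thetaR x τ w t r)

/-- A scenario assigns each vertex a weight within its bounds. -/
def IsScenario (n : ℕ) (wlo whi : ℕ → ℝ) (s : ℕ → ℝ) : Prop :=
  ∀ i, i ≤ n → wlo i ≤ s i ∧ s i ≤ whi i

/-- A `k`-partition-with-sinks of the vertex set `{0,…,n}` into `k` consecutive
nonempty blocks `{l p, …, r p}` (`p ∈ {1,…,k}`) with a sink `t p` in each block. -/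
structure KPartSinks (n k : ℕ) where
  l : ℕ → ℕ
  r : ℕ → ℕ
  t : ℕ → ℕ
  first : l 1 = 0
  last : r k = n
  consec : ∀ p, 1 ≤ p → p < k → l (p + 1) = r p + 1
  block_nonempty : ∀ p, 1 ≤ p → p ≤ k → l p ≤ r p
  sink_lb : ∀ p, 1 ≤ p → p ≤ k → l p ≤ t p
  sink_ub : ∀ p, 1 ≤ p → p ≤ k → t p ≤ r p

/-- `k`-sink evacuation time `Θᵏ(P, {P̂,Ŷ}, w)`. -/
noncomputable def thetaK {n k : ℕ} (x : ℕ → ℝ) (τ : ℝ) (PY : KPartSinks n k) (w : ℕ → ℝ) : ℝ :=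
  maxOver (Finset.Icc 1 k) (fun p => theta1 x τ w (PY.l p) (PY.t p) (PY.r p))

/-- Optimal `k`-sink evacuation time `Θᵏ_opt(P, w)`. -/
noncomputable def thetaOpt (x : ℕ → ℝ) (τ : ℝ) (n k : ℕ) (w : ℕ → ℝ) : ℝ :=
  sInf {v : ℝ | ∃ PY : KPartSinks n k, thetaK x τ PY w = v}

/-- Regret `R({P̂,Ŷ}, w)`. -/
noncomputable def regret {n k : ℕ} (x : ℕ → ℝ) (τ : ℝ) (PY : KPartSinks n k) (w : ℕ → ℝ) : ℝ :=
  thetaK x τ PY w - thetaOpt x τ n k w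

/-- Max-regret `R_max({P̂,Ŷ})`. -/
noncomputable def maxRegret {n k : ℕ} (x : ℕ → ℝ) (τ : ℝ) (wlo whi : ℕ → ℝ)
    (PY : KPartSinks n k) : ℝ :=
  sSup {v : ℝ | ∃ s : ℕ → ℝ, IsScenario n wlo whi s ∧ regret x τ PY s = v}

/-- A worst-case scenario: a scenario attaining the max-regret. -/
def IsWorstCase {n k : ℕ} (x : ℕ → ℝ) (τ : ℝ) (wlo whi : ℕ → ℝ) (PY : KPartSinks n k)
    (s : ℕ → ℝ) : Prop :=
  IsScenario n wlo whi s ∧ regret x τ PY s = maxRegret x τ wlo whi PY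

/-- `d` is the index of the dominant part of `{P̂,Ŷ}` under weights `w`:
the smallest index attaining `max_p Θ¹(P_p, y_p, w)`. -/
def IsDominant {n k : ℕ} (x : ℕ → ℝ) (τ : ℝ) (PY : KPartSinks n k) (w : ℕ → ℝ) (d : ℕ) : Prop :=
  1 ≤ d ∧ d ≤ k ∧
  (∀ p, 1 ≤ p → p ≤ k →
    theta1 x τ w (PY.l p) (PY.t p) (PY.r p) ≤ theta1 x τ w (PY.l d) (PY.t d) (PY.r d)) ∧
  (∀ p, 1 ≤ p → p < d →
    theta1 x τ w (PY.l p) (PY.t p) (PY.r p) < theta1 x τ w (PY.l d) (PY.t d) (PY.r d))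

/-- `R_{lr}(x_t)`: the max-regret of the subpath `[x_l,x_r]` as assumed dominant
part with sink `x_t`. -/
noncomputable def Rsink (x : ℕ → ℝ) (τ : ℝ) (wlo whi : ℕ → ℝ) (n k : ℕ) (l r t : ℕ) : ℝ :=
  sSup {v : ℝ | ∃ s : ℕ → ℝ, IsScenario n wlo whi s ∧
    theta1 x τ s l t r - thetaOpt x τ n k s = v}

/-- `R_{lr}`: the minimax regret of the subpath `[x_l,x_r]` as assumed dominant part. -/
noncomputable def Rlr (x : ℕ → ℝ) (τ : ℝ) (wlo whi : ℕ → ℝ) (n k : ℕ) (l r : ℕ) : ℝ :=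
  sInf {v : ℝ | ∃ t, l ≤ t ∧ t ≤ r ∧ Rsink x τ wlo whi n k l r t = v}

/-- A partition of `{0,…,i}` into `q` consecutive nonempty blocks `{l p, …, r p}`. -/
def IsQPartition (q i : ℕ) (l r : ℕ → ℕ) : Prop :=
  l 1 = 0 ∧ r q = i ∧ (∀ p, 1 ≤ p → p < q → l (p + 1) = r p + 1) ∧
  (∀ p, 1 ≤ p → p ≤ q → l p ≤ r p)

/-- `M(q, i)`: the minimum over partitions of `{0,…,i}` into `q` consecutive
nonempty blocks of `max_p R_{l_p r_p}`. -/
noncomputable def Mreg (x : ℕ → ℝ) (τ : ℝ) (wlo whi : ℕ → ℝ) (n k : ℕ) (q i : ℕ) : ℝ :=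
  sInf {v : ℝ | ∃ lf rf : ℕ → ℕ, IsQPartition q i lf rf ∧
    maxOver (Finset.Icc 1 q) (fun p => Rlr x τ wlo whi n k (lf p) (rf p)) = v}

/-- Left-dominant scenario on `{l,…,r}`. -/
def LeftDominant (wlo whi s : ℕ → ℝ) (l r : ℕ) : Prop :=
  ∃ i, l ≤ i ∧ i ≤ r + 1 ∧ (∀ j, l ≤ j → j < i → s j = whi j) ∧
    (∀ j, i ≤ j → j ≤ r → s j = wlo j)

/-- Right-dominant scenario on `{l,…,r}`. -/
def RightDominant (wlo whi s : ℕ → ℝ) (l r : ℕ) : Prop :=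
  ∃ i, l ≤ i ∧ i ≤ r + 1 ∧ (∀ j, l ≤ j → j < i → s j = wlo j) ∧
    (∀ j, i ≤ j → j ≤ r → s j = whi j)

section Aux

lemma maxOver_nonneg (S : Finset ℕ) (f : ℕ → ℝ) : 0 ≤ maxOver S f := by
  classical
  unfold maxOver
  induction S using Finset.induction with
  | empty => simp
  | insert a s h ih => simp only [Finset.fold_insert h, le_max_iff]; right; exact ih

lemma le_maxOver {S : Finset ℕ} {f : ℕ → ℝ} {i : ℕ} (h : i ∈ S) : f i ≤ maxOver S f := by
  classical
  exact Finset.le_fold_max _ |>.2 (Or.inr ⟨i, h, le_rfl⟩)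

lemma maxOver_le {S : Finset ℕ} {f : ℕ → ℝ} {a : ℝ} (h0 : 0 ≤ a) (h : ∀ i ∈ S, f i ≤ a) :
    maxOver S f ≤ a :=
  Finset.fold_max_le _ |>.2 ⟨h0, h⟩

lemma x_mono {n : ℕ} {x : ℕ → ℝ} (hx : ∀ i, i < n → x i < x (i + 1))
    {i j : ℕ} (hij : i ≤ j) (hj : j ≤ n) : x i ≤ x j := by
  induction j with
  | zero => simp [Nat.le_zero.mp hij]
  | succ m ih =>
    rcases Nat.lt_or_ge i (m+1) with h | h
    · exact le_trans (ih (by omega) (by omega)) (le_of_lt (hx m (by omega)))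
    · have : i = m + 1 := by omega
      simp [this]

lemma sc_nonneg {n : ℕ} {wlo whi s : ℕ → ℝ}
    (hw : ∀ i, i ≤ n → 0 < wlo i ∧ wlo i ≤ whi i)
    (hs : IsScenario n wlo whi s) {j : ℕ} (hj : j ≤ n) : 0 ≤ s j :=
  le_trans (le_of_lt (hw j hj).1) (hs j hj).1

lemma theta1_nonneg (x : ℕ → ℝ) (τ : ℝ) (s : ℕ → ℝ) (l t r : ℕ) :
    0 ≤ theta1 x τ s l t r :=
  le_trans (maxOver_nonneg _ _) (le_max_left _ _)

lemma thetaOpt_nonneg (x : ℕ → ℝ) (τ : ℝ) (n k : ℕ) (w : ℕ → ℝ) :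
    0 ≤ thetaOpt x τ n k w := by
  apply Real.sInf_nonneg
  rintro v ⟨PY, rfl⟩
  exact maxOver_nonneg _ _

lemma theta1_le_bound {n : ℕ} {x : ℕ → ℝ} {τ : ℝ} {wlo whi s : ℕ → ℝ}
    (hx : ∀ i, i < n → x i < x (i + 1)) (hτ : 0 < τ)
    (hw : ∀ i, i ≤ n → 0 < wlo i ∧ wlo i ≤ whi i) (hs : IsScenario n wlo whi s)
    {l t r : ℕ} (hlt : l ≤ t) (htr : t ≤ r) (hr : r ≤ n) :
    theta1 x τ s l t r ≤ (x r - x l) * τ + ∑ j ∈ Finset.Icc l r, whi j := by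
  have hB : (0:ℝ) ≤ (x r - x l) * τ + ∑ j ∈ Finset.Icc l r, whi j := by
    apply add_nonneg
    · exact mul_nonneg (by linarith [x_mono hx (le_trans hlt htr) hr]) (le_of_lt hτ)
    · exact Finset.sum_nonneg fun j hj => by
        have hj' : j ≤ n := le_trans (Finset.mem_Icc.mp hj).2 hr
        linarith [(hw j hj').1, (hw j hj').2]
  have hsum : ∀ a c : ℕ, l ≤ a → c ≤ r → (∑ j ∈ Finset.Icc a c, s j) ≤ ∑ j ∈ Finset.Icc l r, whi j := by
    intro a c ha hc
    calc (∑ j ∈ Finset.Icc a c, s j) ≤ ∑ j ∈ Finset.Icc a c, whi j := by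
          apply Finset.sum_le_sum
          intro j hj
          exact (hs j (le_trans (le_trans (Finset.mem_Icc.mp hj).2 hc) hr)).2
      _ ≤ ∑ j ∈ Finset.Icc l r, whi j := by
          apply Finset.sum_le_sum_of_subset_of_nonneg
          · intro j hj; simp only [Finset.mem_Icc] at *; omega
          · intro j hj _
            have hj' : j ≤ n := le_trans (Finset.mem_Icc.mp hj).2 hr
            linarith [(hw j hj').1, (hw j hj').2]
  apply max_le
  · apply maxOver_le hB
    intro i hi
    rw [Finset.mem_Ico] at hi
    apply add_le_add
    · apply mul_le_mul_of_nonneg_right _ (le_of_lt hτ)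
      have h1 : x t ≤ x r := x_mono hx htr hr
      have h2 : x l ≤ x i := x_mono hx hi.1 (by omega)
      linarith
    · exact hsum l i le_rfl (by omega)
  · apply maxOver_le hB
    intro i hi
    rw [Finset.mem_Ioc] at hi
    apply add_le_add
    · apply mul_le_mul_of_nonneg_right _ (le_of_lt hτ)
      have h1 : x i ≤ x r := x_mono hx hi.2 hr
      have h2 : x l ≤ x t := x_mono hx hlt (by omega)
      linarith
    · exact hsum i r (by omega) le_rfl

lemma Rsink_bddAbove {n k : ℕ} {x : ℕ → ℝ} {τ : ℝ} {wlo whi : ℕ → ℝ}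
    (hx : ∀ i, i < n → x i < x (i + 1)) (hτ : 0 < τ)
    (hw : ∀ i, i ≤ n → 0 < wlo i ∧ wlo i ≤ whi i)
    {l t r : ℕ} (hlt : l ≤ t) (htr : t ≤ r) (hr : r ≤ n) :
    BddAbove {v : ℝ | ∃ s : ℕ → ℝ, IsScenario n wlo whi s ∧
      theta1 x τ s l t r - thetaOpt x τ n k s = v} := by
  refine ⟨(x r - x l) * τ + ∑ j ∈ Finset.Icc l r, whi j, ?_⟩
  rintro v ⟨s, hs, rfl⟩
  have := theta1_le_bound hx hτ hw hs hlt htr hr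
  have := thetaOpt_nonneg x τ n k s
  linarith

lemma wlo_scenario {n : ℕ} {wlo whi : ℕ → ℝ}
    (hw : ∀ i, i ≤ n → 0 < wlo i ∧ wlo i ≤ whi i) : IsScenario n wlo whi wlo :=
  fun i hi => ⟨le_rfl, (hw i hi).2⟩

lemma scSup_le_scSup {n : ℕ} {wlo whi : ℕ → ℝ}
    (hw : ∀ i, i ≤ n → 0 < wlo i ∧ wlo i ≤ whi i) {f g : (ℕ → ℝ) → ℝ}
    (hfg : ∀ s, IsScenario n wlo whi s → f s ≤ g s)
    (hb : BddAbove {v : ℝ | ∃ s : ℕ → ℝ, IsScenario n wlo whi s ∧ g s = v}) :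
    sSup {v : ℝ | ∃ s : ℕ → ℝ, IsScenario n wlo whi s ∧ f s = v} ≤
    sSup {v : ℝ | ∃ s : ℕ → ℝ, IsScenario n wlo whi s ∧ g s = v} := by
  have hne : {v : ℝ | ∃ s : ℕ → ℝ, IsScenario n wlo whi s ∧ f s = v}.Nonempty :=
    ⟨f wlo, wlo, wlo_scenario hw, rfl⟩
  apply csSup_le hne
  rintro v ⟨s, hs, rfl⟩
  exact le_trans (hfg s hs) (le_csSup hb ⟨s, hs, rfl⟩)

lemma theta1_mono {n : ℕ} {x : ℕ → ℝ} {τ : ℝ} {s : ℕ → ℝ}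
    (hx : ∀ i, i < n → x i < x (i + 1)) (hτ : 0 < τ)
    (hsnn : ∀ j, j ≤ n → 0 ≤ s j)
    {l' l t r r' : ℕ} (hl' : l' ≤ l) (hlt : l ≤ t) (htr : t ≤ r) (hr : r ≤ r') (hn : r' ≤ n) :
    theta1 x τ s l t r ≤ theta1 x τ s l' t r' := by
  apply max_le
  · apply le_trans _ (le_max_left _ _)
    apply maxOver_le (maxOver_nonneg _ _)
    intro i hi
    rw [Finset.mem_Ico] at hi
    apply le_trans _ (le_maxOver (Finset.mem_Ico.mpr ⟨le_trans hl' hi.1, hi.2⟩))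
    apply add_le_add le_rfl
    apply Finset.sum_le_sum_of_subset_of_nonneg
    · intro j hj; simp only [Finset.mem_Icc] at *; omega
    · intro j hj _
      exact hsnn j (by have := (Finset.mem_Icc.mp hj).2; omega)
  · apply le_trans _ (le_max_right _ _)
    apply maxOver_le (maxOver_nonneg _ _)
    intro i hi
    rw [Finset.mem_Ioc] at hi
    apply le_trans _ (le_maxOver (Finset.mem_Ioc.mpr ⟨hi.1, le_trans hi.2 hr⟩))
    apply add_le_add le_rfl
    apply Finset.sum_le_sum_of_subset_of_nonneg
    · intro j hj; simp only [Finset.mem_Icc] at *; omega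
    · intro j hj _
      exact hsnn j (by have := (Finset.mem_Icc.mp hj).2; omega)

lemma theta1_clamp_left {n : ℕ} {x : ℕ → ℝ} {τ : ℝ} {s : ℕ → ℝ}
    (hx : ∀ i, i < n → x i < x (i + 1)) (hτ : 0 < τ)
    (hsnn : ∀ j, j ≤ n → 0 ≤ s j)
    {l' t' l r r' : ℕ} (hl' : l' ≤ t') (ht' : t' ≤ l) (hlr : l ≤ r) (hr : r ≤ r') (hn : r' ≤ n) :
    theta1 x τ s l l r ≤ theta1 x τ s l' t' r' := by
  apply max_le
  · simp [thetaL, maxOver]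
    exact theta1_nonneg x τ s l' t' r'
  · apply le_trans _ (le_max_right _ _)
    apply maxOver_le (maxOver_nonneg _ _)
    intro i hi
    rw [Finset.mem_Ioc] at hi
    apply le_trans _ (le_maxOver (Finset.mem_Ioc.mpr ⟨by omega, le_trans hi.2 hr⟩))
    apply add_le_add
    · apply mul_le_mul_of_nonneg_right _ (le_of_lt hτ)
      have := x_mono hx ht' (by omega)
      linarith
    · apply Finset.sum_le_sum_of_subset_of_nonneg
      · intro j hj; simp only [Finset.mem_Icc] at *; omega
      · intro j hj _
        exact hsnn j (by have := (Finset.mem_Icc.mp hj).2; omega)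

lemma theta1_clamp_right {n : ℕ} {x : ℕ → ℝ} {τ : ℝ} {s : ℕ → ℝ}
    (hx : ∀ i, i < n → x i < x (i + 1)) (hτ : 0 < τ)
    (hsnn : ∀ j, j ≤ n → 0 ≤ s j)
    {l' l r t' r' : ℕ} (hl' : l' ≤ l) (hlr : l ≤ r) (hrt' : r ≤ t') (ht' : t' ≤ r') (hn : r' ≤ n) :
    theta1 x τ s l r r ≤ theta1 x τ s l' t' r' := by
  apply max_le
  · apply le_trans _ (le_max_left _ _)
    apply maxOver_le (maxOver_nonneg _ _)
    intro i hi
    rw [Finset.mem_Ico] at hi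
    apply le_trans _ (le_maxOver (Finset.mem_Ico.mpr ⟨le_trans hl' hi.1, by omega⟩))
    apply add_le_add
    · apply mul_le_mul_of_nonneg_right _ (le_of_lt hτ)
      have := x_mono hx hrt' (by omega)
      linarith
    · apply Finset.sum_le_sum_of_subset_of_nonneg
      · intro j hj; simp only [Finset.mem_Icc] at *; omega
      · intro j hj _
        exact hsnn j (by have := (Finset.mem_Icc.mp hj).2; omega)
  · simp [thetaR, maxOver]
    exact theta1_nonneg x τ s l' t' r'

lemma Rsink_mono {n k : ℕ} {x : ℕ → ℝ} {τ : ℝ} {wlo whi : ℕ → ℝ}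
    (hx : ∀ i, i < n → x i < x (i + 1)) (hτ : 0 < τ)
    (hw : ∀ i, i ≤ n → 0 < wlo i ∧ wlo i ≤ whi i)
    {l' l t r r' : ℕ} (hl' : l' ≤ l) (hlt : l ≤ t) (htr : t ≤ r) (hr : r ≤ r') (hn : r' ≤ n) :
    Rsink x τ wlo whi n k l r t ≤ Rsink x τ wlo whi n k l' r' t := by
  apply scSup_le_scSup hw
  · intro s hs
    have := theta1_mono hx hτ (fun j hj => sc_nonneg hw hs hj) hl' hlt htr hr hn
    linarith
  · exact Rsink_bddAbove hx hτ hw (le_trans hl' hlt) (le_trans htr hr) hn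

lemma theta1_self (x : ℕ → ℝ) (τ : ℝ) (s : ℕ → ℝ) (m : ℕ) : theta1 x τ s m m m = 0 := by
  simp [theta1, thetaL, thetaR, maxOver]

lemma Rsink_singleton_le {n k : ℕ} {x : ℕ → ℝ} {τ : ℝ} {wlo whi : ℕ → ℝ}
    (hx : ∀ i, i < n → x i < x (i + 1)) (hτ : 0 < τ)
    (hw : ∀ i, i ≤ n → 0 < wlo i ∧ wlo i ≤ whi i)
    (m : ℕ) {l t r : ℕ} (hlt : l ≤ t) (htr : t ≤ r) (hr : r ≤ n) :
    Rsink x τ wlo whi n k m m m ≤ Rsink x τ wlo whi n k l r t := by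
  apply scSup_le_scSup hw
  · intro s hs
    rw [theta1_self]
    have := theta1_nonneg x τ s l t r
    linarith
  · exact Rsink_bddAbove hx hτ hw hlt htr hr

lemma Rsink_lb {n k : ℕ} {x : ℕ → ℝ} {τ : ℝ} {wlo whi : ℕ → ℝ}
    (hx : ∀ i, i < n → x i < x (i + 1)) (hτ : 0 < τ)
    (hw : ∀ i, i ≤ n → 0 < wlo i ∧ wlo i ≤ whi i)
    {l t r : ℕ} (hlt : l ≤ t) (htr : t ≤ r) (hr : r ≤ n) :
    -(thetaOpt x τ n k wlo) ≤ Rsink x τ wlo whi n k l r t := by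
  have hmem : theta1 x τ wlo l t r - thetaOpt x τ n k wlo ∈
      {v : ℝ | ∃ s : ℕ → ℝ, IsScenario n wlo whi s ∧
        theta1 x τ s l t r - thetaOpt x τ n k s = v} := ⟨wlo, wlo_scenario hw, rfl⟩
  have := le_csSup (Rsink_bddAbove hx hτ hw hlt htr hr) hmem
  have h0 := theta1_nonneg x τ wlo l t r
  unfold Rsink
  linarith

lemma RlrSet_bddBelow {n k : ℕ} {x : ℕ → ℝ} {τ : ℝ} {wlo whi : ℕ → ℝ}
    (hx : ∀ i, i < n → x i < x (i + 1)) (hτ : 0 < τ)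
    (hw : ∀ i, i ≤ n → 0 < wlo i ∧ wlo i ≤ whi i)
    {l r : ℕ} (hr : r ≤ n) :
    BddBelow {v : ℝ | ∃ t, l ≤ t ∧ t ≤ r ∧ Rsink x τ wlo whi n k l r t = v} := by
  refine ⟨-(thetaOpt x τ n k wlo), ?_⟩
  rintro v ⟨t, h1, h2, rfl⟩
  exact Rsink_lb hx hτ hw h1 h2 hr

lemma Rlr_mono {n k : ℕ} {x : ℕ → ℝ} {τ : ℝ} {wlo whi : ℕ → ℝ}
    (hx : ∀ i, i < n → x i < x (i + 1)) (hτ : 0 < τ)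
    (hw : ∀ i, i ≤ n → 0 < wlo i ∧ wlo i ≤ whi i)
    {l' l r r' : ℕ} (hl' : l' ≤ l) (hlr : l ≤ r) (hr : r ≤ r') (hn : r' ≤ n) :
    Rlr x τ wlo whi n k l r ≤ Rlr x τ wlo whi n k l' r' := by
  unfold Rlr
  have hne : {v : ℝ | ∃ t, l' ≤ t ∧ t ≤ r' ∧ Rsink x τ wlo whi n k l' r' t = v}.Nonempty :=
    ⟨Rsink x τ wlo whi n k l' r' l', l', le_rfl, by omega, rfl⟩
  apply le_csInf hne
  rintro v ⟨t', ht'1, ht'2, rfl⟩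
  rcases Nat.lt_or_ge t' l with hc | hc
  · -- clamp to l
    apply le_trans (csInf_le (RlrSet_bddBelow hx hτ hw (le_trans hr hn))
      ⟨l, le_rfl, hlr, rfl⟩)
    apply scSup_le_scSup hw
    · intro s hs
      have := theta1_clamp_left hx hτ (fun j hj => sc_nonneg hw hs hj)
        ht'1 (by omega) hlr hr hn
      linarith
    · exact Rsink_bddAbove hx hτ hw ht'1 ht'2 hn
  rcases le_or_gt t' r with hc2 | hc2
  · -- t' in [l, r]
    apply le_trans (csInf_le (RlrSet_bddBelow hx hτ hw (le_trans hr hn))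
      ⟨t', hc, hc2, rfl⟩)
    exact Rsink_mono hx hτ hw hl' hc hc2 hr hn
  · -- clamp to r
    apply le_trans (csInf_le (RlrSet_bddBelow hx hτ hw (le_trans hr hn))
      ⟨r, hlr, le_rfl, rfl⟩)
    apply scSup_le_scSup hw
    · intro s hs
      have := theta1_clamp_right hx hτ (fun j hj => sc_nonneg hw hs hj)
        hl' hlr (by omega) ht'2 hn
      linarith
    · exact Rsink_bddAbove hx hτ hw ht'1 ht'2 hn

lemma Rlr_singleton_le {n k : ℕ} {x : ℕ → ℝ} {τ : ℝ} {wlo whi : ℕ → ℝ}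
    (hx : ∀ i, i < n → x i < x (i + 1)) (hτ : 0 < τ)
    (hw : ∀ i, i ≤ n → 0 < wlo i ∧ wlo i ≤ whi i)
    (m : ℕ) {l r : ℕ} (hlr : l ≤ r) (hn : r ≤ n) :
    Rlr x τ wlo whi n k m m ≤ Rlr x τ wlo whi n k l r := by
  have heq : {v : ℝ | ∃ t, m ≤ t ∧ t ≤ m ∧ Rsink x τ wlo whi n k m m t = v} =
      {Rsink x τ wlo whi n k m m m} := by
    ext v
    constructor
    · rintro ⟨t, h1, h2, rfl⟩
      have : t = m := by omega
      simp [this]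
    · rintro rfl
      exact ⟨m, le_rfl, le_rfl, rfl⟩
  unfold Rlr
  rw [heq, csInf_singleton]
  have hne : {v : ℝ | ∃ t, l ≤ t ∧ t ≤ r ∧ Rsink x τ wlo whi n k l r t = v}.Nonempty :=
    ⟨Rsink x τ wlo whi n k l r l, l, le_rfl, hlr, rfl⟩
  apply le_csInf hne
  rintro v ⟨t, h1, h2, rfl⟩
  exact Rsink_singleton_le hx hτ hw m h1 h2 hn

lemma qpart_exists (q j : ℕ) (hq : 1 ≤ q) (hj : q - 1 ≤ j) :
    IsQPartition q j (fun p => p - 1) (fun p => if p = q then j else p - 1) := by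
  refine ⟨rfl, by simp, ?_, ?_⟩
  · intro p hp1 hp2
    have : ¬ (p = q) := by omega
    simp [this]
    omega
  · intro p hp1 hp2
    by_cases h : p = q <;> simp [h] <;> omega

lemma qpart_rf_le {q j : ℕ} {lf rf : ℕ → ℕ} (h : IsQPartition q j lf rf) :
    ∀ p, 1 ≤ p → p ≤ q → rf p ≤ j := by
  obtain ⟨h1, h2, h3, h4⟩ := h
  have key : ∀ d p, 1 ≤ p → p ≤ q → q - p ≤ d → rf p ≤ j := by
    intro d
    induction d with
    | zero =>
      intro p hp1 hp2 hd
      have hpq' : p = q := by omega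
      rw [hpq']; omega
    | succ d ih =>
      intro p hp1 hp2 hd
      rcases Nat.lt_or_ge p q with hpq | hpq
      · have h5 := h3 p hp1 hpq
        have h6 := h4 (p+1) (by omega) (by omega)
        have h7 := ih (p+1) (by omega) (by omega) (by omega)
        omega
      · have hpq' : p = q := by omega
        rw [hpq']; omega
  intro p hp1 hp2
  exact key (q - p) p hp1 hp2 le_rfl

lemma Mreg_mono {n k : ℕ} {x : ℕ → ℝ} {τ : ℝ} {wlo whi : ℕ → ℝ}
    (hx : ∀ i, i < n → x i < x (i + 1)) (hτ : 0 < τ)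
    (hw : ∀ i, i ≤ n → 0 < wlo i ∧ wlo i ≤ whi i)
    {q j j' : ℕ} (hq : 1 ≤ q) (hj : q - 1 ≤ j) (hjj : j ≤ j') (hn : j' ≤ n) :
    Mreg x τ wlo whi n k q j ≤ Mreg x τ wlo whi n k q j' := by
  unfold Mreg
  have hne : {v : ℝ | ∃ lf rf : ℕ → ℕ, IsQPartition q j' lf rf ∧
      maxOver (Finset.Icc 1 q) (fun p => Rlr x τ wlo whi n k (lf p) (rf p)) = v}.Nonempty :=
    ⟨_, _, _, qpart_exists q j' hq (by omega), rfl⟩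
  apply le_csInf hne
  rintro v ⟨lf, rf, hpart, rfl⟩
  set lf₂ : ℕ → ℕ := fun p => min (lf p) (j - (q - p)) with hlf₂
  set rf₂ : ℕ → ℕ := fun p => min (rf p) (j - (q - p)) with hrf₂
  obtain ⟨h1, h2, h3, h4⟩ := hpart
  have hrfle : ∀ p, 1 ≤ p → p ≤ q → rf p ≤ j' := qpart_rf_le ⟨h1, h2, h3, h4⟩
  have hpart₂ : IsQPartition q j lf₂ rf₂ := by
    refine ⟨?_, ?_, ?_, ?_⟩
    · simp [hlf₂, h1]
    · simp [hrf₂, h2]; omega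
    · intro p hp1 hp2
      have hc := h3 p hp1 hp2
      simp only [hlf₂, hrf₂]
      omega
    · intro p hp1 hp2
      have := h4 p hp1 hp2
      simp only [hlf₂, hrf₂]
      omega
  have hbdd : BddBelow {v : ℝ | ∃ lf rf : ℕ → ℕ, IsQPartition q j lf rf ∧
      maxOver (Finset.Icc 1 q) (fun p => Rlr x τ wlo whi n k (lf p) (rf p)) = v} := by
    refine ⟨0, ?_⟩
    rintro v ⟨lf, rf, hp, rfl⟩
    exact maxOver_nonneg _ _
  apply le_trans (csInf_le hbdd ⟨lf₂, rf₂, hpart₂, rfl⟩)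
  apply maxOver_le (maxOver_nonneg _ _)
  intro p hp
  rw [Finset.mem_Icc] at hp
  have hlr := h4 p hp.1 hp.2
  have hrn : rf p ≤ n := le_trans (hrfle p hp.1 hp.2) hn
  apply le_trans _ (le_maxOver (Finset.mem_Icc.mpr hp))
  by_cases hcase : lf p ≤ j - (q - p)
  · have e1 : lf₂ p = lf p := by simp only [hlf₂]; omega
    have e2 : rf₂ p ≤ rf p := by simp only [hrf₂]; omega
    have e3 : lf₂ p ≤ rf₂ p := hpart₂.2.2.2 p hp.1 hp.2
    rw [e1] at e3 ⊢
    exact Rlr_mono hx hτ hw le_rfl e3 e2 hrn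
  · have e1 : lf₂ p = rf₂ p := by simp only [hlf₂, hrf₂]; omega
    rw [e1]
    exact Rlr_singleton_le hx hτ hw _ hlr hrn

end Aux
/-- with the blocks after the `i`-th fixed (their contribution
being the constant `C`) and the right end `b` of the `i`-th block fixed, the
function `l ↦ max(M(i−1, l−1), R_{l b}, C)` is unimodal with a unique minimum
value on `{i−1, …, b}`. -/
theorem stmt_7 (n k : ℕ) (x : ℕ → ℝ) (τ : ℝ) (wlo whi : ℕ → ℝ)
    (hx : ∀ i, i < n → x i < x (i + 1)) (hτ : 0 < τ)
    (hw : ∀ i, i ≤ n → 0 < wlo i ∧ wlo i ≤ whi i) (hk : 1 ≤ k)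
    (i b : ℕ) (C : ℝ) (hi1 : 2 ≤ i) (hi2 : i ≤ k) (hb1 : i - 1 ≤ b) (hb2 : b ≤ n) :
    ∃ m, i - 1 ≤ m ∧ m ≤ b ∧
      (∀ a a', i - 1 ≤ a → a ≤ a' → a' ≤ m →
        max (max (Mreg x τ wlo whi n k (i - 1) (a' - 1)) (Rlr x τ wlo whi n k a' b)) C ≤
        max (max (Mreg x τ wlo whi n k (i - 1) (a - 1)) (Rlr x τ wlo whi n k a b)) C) ∧
      (∀ a a', m ≤ a → a ≤ a' → a' ≤ b →
        max (max (Mreg x τ wlo whi n k (i - 1) (a - 1)) (Rlr x τ wlo whi n k a b)) C ≤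
        max (max (Mreg x τ wlo whi n k (i - 1) (a' - 1)) (Rlr x τ wlo whi n k a' b)) C) := by

  classical
  set g : ℕ → ℝ := fun a =>
    max (max (Mreg x τ wlo whi n k (i - 1) (a - 1)) (Rlr x τ wlo whi n k a b)) C with hg
  obtain ⟨m, hmmem, hmin⟩ :=
    Finset.exists_min_image (Finset.Icc (i - 1) b) g ⟨i - 1, Finset.mem_Icc.mpr ⟨le_rfl, hb1⟩⟩
  rw [Finset.mem_Icc] at hmmem
  have hq : 1 ≤ i - 1 := by omega
  refine ⟨m, hmmem.1, hmmem.2, ?_, ?_⟩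
  · intro a a' ha haa' ha'm
    have hab : a ≤ b := by omega
    have ha'b : a' ≤ b := by omega
    have hgm : g m ≤ g a := hmin a (Finset.mem_Icc.mpr ⟨ha, hab⟩)
    have hM : Mreg x τ wlo whi n k (i - 1) (a' - 1) ≤ g a := by
      calc Mreg x τ wlo whi n k (i - 1) (a' - 1)
          ≤ Mreg x τ wlo whi n k (i - 1) (m - 1) :=
            Mreg_mono hx hτ hw hq (by omega) (by omega) (by omega)
        _ ≤ g m := le_trans (le_max_left _ _) (le_max_left _ _)
        _ ≤ g a := hgm
    have hR : Rlr x τ wlo whi n k a' b ≤ g a := by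
      calc Rlr x τ wlo whi n k a' b
          ≤ Rlr x τ wlo whi n k a b := Rlr_mono hx hτ hw haa' ha'b le_rfl hb2
        _ ≤ g a := le_trans (le_max_right _ _) (le_max_left _ _)
    exact max_le (max_le hM hR) (le_max_right _ _)
  · intro a a' hma ha'a hab
    have hia : i - 1 ≤ a := by omega
    have hgm : g m ≤ g a' := hmin a' (Finset.mem_Icc.mpr ⟨by omega, hab⟩)
    have hM : Mreg x τ wlo whi n k (i - 1) (a - 1) ≤ g a' := by
      calc Mreg x τ wlo whi n k (i - 1) (a - 1)
          ≤ Mreg x τ wlo whi n k (i - 1) (a' - 1) :=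
            Mreg_mono hx hτ hw hq (by omega) (by omega) (by omega)
        _ ≤ g a' := le_trans (le_max_left _ _) (le_max_left _ _)
    have hR : Rlr x τ wlo whi n k a b ≤ g a' := by
      calc Rlr x τ wlo whi n k a b
          ≤ Rlr x τ wlo whi n k m b := Rlr_mono hx hτ hw hma (by omega) le_rfl hb2
        _ ≤ g m := le_trans (le_max_right _ _) (le_max_left _ _)
        _ ≤ g a' := hgm
    exact max_le (max_le hM hR) (le_max_right _ _)
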